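/- Let n≥3 be odd and u ∈ F_{3^n}\F_3 with χ(u+1)≠χ(u-1). With g₁(z)=-(u+1)z, g₃(z)=z(z-1+u), g₄(z)=z²-z+u², we have ∑_{z∈F_{3^n}} χ(g₃(z)g₄(z)) + ∑_{z∈F_{3^n}} χ(g₁(z)g₃(z)g₄(z)) = -2. -/

import Mathlib

/-!
In characteristic 3 both sums reduce to the character sum `J` of the cubic
`c(y) = -(u + 1) y (y² + (u + 1) y - u (u + 1))`.

In the second sum the factor `z²` drops out, and the shift `z ↦ z + 1 - u` turns the remaining
cubic into `c`; the lost term `z = 0` contributes `χ(-(u² - 1) u²) = χ(-1) χ(u² - 1) = 1`, so the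
sum is `J - 1`.

The quartic of the first sum vanishes at `1 - u`, so `z = 1 - u + 1/s` turns it into a cubic
`g(s)` with `g(0) = 1`, and the sum becomes `∑ χ(g) - 1`. The cubic `g` is the Frobenius twist
of `c` up to a quadratic twist by `-1`: `g((x³ + u(u+1)²) / (u(u-1)(u+1)²))` is a nonzero square
times `-c(x)³`. Since `x ↦ x³` is a bijection and `χ(-1) = -1`, `∑ χ(g) = -J`, so the two sums
add up to `-2`.
-/

open Finset

theorem Fintype.sum_eq_sum_sub_of_eq_of_ne {ι M : Type*} [Fintype ι] [DecidableEq ι]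
    [AddCommGroup M] {f g : ι → M} (a : ι) (ha : f a = 0) (h : ∀ x, x ≠ a → f x = g x) :
    ∑ x, f x = ∑ x, g x - g a := by
  have hcompl : ∑ x ∈ {a}ᶜ, f x = ∑ x ∈ {a}ᶜ, g x :=
    Finset.sum_congr rfl fun x hx => h x (by simpa using hx)
  rw [Fintype.sum_eq_add_sum_compl a f, Fintype.sum_eq_add_sum_compl a g, ha, hcompl]
  abel

theorem Nat.three_pow_mod_four_of_odd {n : ℕ} (hn : Odd n) : 3 ^ n % 4 = 3 := by
  obtain ⟨k, rfl⟩ := hn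
  rw [pow_succ, pow_mul, Nat.mul_mod, Nat.pow_mod]
  norm_num

theorem sum_comp_frobenius_add_div {F M : Type*} [Field F] [Fintype F] [AddCommMonoid M]
    (p : ℕ) [Fact p.Prime] [CharP F p] (φ : F → M) (c : F) {d : F} (hd : d ≠ 0) :
    ∑ x, φ ((x ^ p + c) / d) = ∑ s, φ s := by
  calc ∑ x, φ ((x ^ p + c) / d) = ∑ y, φ ((y + c) / d) :=
        Equiv.sum_comp (frobeniusEquiv F p).toEquiv fun y => φ ((y + c) / d)
    _ = ∑ y, φ (y / d) := Equiv.sum_comp (Equiv.addRight c) fun y => φ (y / d)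
    _ = ∑ s, φ s := Equiv.sum_comp (Equiv.divRight₀ d hd) φ

section QuadraticChar

variable {F : Type*} [Field F] [Fintype F] [DecidableEq F]

theorem quadraticChar_sq_mul {t : F} (ht : t ≠ 0) (x : F) :
    quadraticChar F (t ^ 2 * x) = quadraticChar F x := by
  rw [map_mul, quadraticChar_sq_one' ht, one_mul]

theorem quadraticChar_pow_of_odd {k : ℕ} (hk : Odd k) (x : F) :
    quadraticChar F (x ^ k) = quadraticChar F x := by
  rw [map_pow]
  rcases quadraticChar_isQuadratic F x with h | h | h <;> simp [h, hk.neg_one_pow, hk.pos.ne']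

theorem quadraticChar_mul_eq_neg_one_of_ne {a b : F} (ha : a ≠ 0) (hb : b ≠ 0)
    (hab : quadraticChar F a ≠ quadraticChar F b) : quadraticChar F (a * b) = -1 := by
  rw [map_mul]
  rcases quadraticChar_dichotomy ha with h₁ | h₁ <;>
    rcases quadraticChar_dichotomy hb with h₂ | h₂ <;> simp_all

theorem sum_quadraticChar_sq_mul (h : F → F) :
    ∑ z, quadraticChar F (z ^ 2 * h z) = ∑ z, quadraticChar F (h z) - quadraticChar F (h 0) :=
  Fintype.sum_eq_sum_sub_of_eq_of_ne 0 (by simp) fun z hz => quadraticChar_sq_mul hz (h z)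

theorem sum_quadraticChar_eq_of_inv_add {f g : F → F} {a : F} (ha : f a = 0)
    (hfg : ∀ s, s ≠ 0 → s ^ 4 * f (a + s⁻¹) = g s) :
    ∑ z, quadraticChar F (f z) = ∑ s, quadraticChar F (g s) - quadraticChar F (g 0) := by
  rw [← Equiv.sum_comp ((Equiv.inv F).trans (Equiv.addLeft a))]
  refine Fintype.sum_eq_sum_sub_of_eq_of_ne 0 (by simp [ha]) fun s hs => ?_
  rw [← hfg s hs, show s ^ 4 = (s ^ 2) ^ 2 by ring, quadraticChar_sq_mul (pow_ne_zero 2 hs)]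
  rfl

end QuadraticChar

section CharThree

variable {F : Type*} [Field F] [Fintype F] [DecidableEq F] [CharP F 3]

def cubicCharSum (u : F) : ℤ :=
  ∑ y : F, quadraticChar F (-(u + 1) * (y * (y ^ 2 + (u + 1) * y - u * (u + 1))))

theorem sum_quadraticChar_g₁g₃g₄ {u : F} (hneg : quadraticChar F (-1) = -1) (hu₀ : u ≠ 0)
    (hu : quadraticChar F ((u + 1) * (u - 1)) = -1) :
    ∑ z : F, quadraticChar F ((-(u + 1) * z) * (z * (z - 1 + u)) * (z ^ 2 - z + u ^ 2)) =
      cubicCharSum u - 1 := by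
  have hsq : ∀ z : F, (-(u + 1) * z) * (z * (z - 1 + u)) * (z ^ 2 - z + u ^ 2) =
      z ^ 2 * (-(u + 1) * ((z - 1 + u) * (z ^ 2 - z + u ^ 2))) := fun z => by ring
  simp_rw [hsq]
  rw [sum_quadraticChar_sq_mul]
  congr 1
  · rw [cubicCharSum, ← Equiv.sum_comp (Equiv.addRight (1 - u))]
    refine sum_congr rfl fun y _ => congrArg _ ?_
    simp only [Equiv.coe_addRight]
    linear_combination (norm := ring_nf)
    reduce_mod_char!
  · rw [show -(u + 1) * ((0 - 1 + u) * (0 ^ 2 - 0 + u ^ 2)) = u ^ 2 * (-1 * ((u + 1) * (u - 1)))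
      by ring, quadraticChar_sq_mul hu₀, map_mul, hneg, hu]
    rfl

theorem sum_quadraticChar_g₃g₄ {u : F} (hneg : quadraticChar F (-1) = -1) (hu₀ : u ≠ 0)
    (hu₁ : u - 1 ≠ 0) (hu₂ : u + 1 ≠ 0) :
    ∑ z : F, quadraticChar F ((z * (z - 1 + u)) * (z ^ 2 - z + u ^ 2)) =
      -cubicCharSum u - 1 := by
  set g : F → F := fun s => (1 + (1 - u) * s) * (1 + (u + 1) * s - (u ^ 2 + u) * s ^ 2)
  have hinv : ∀ s : F, s ≠ 0 → s ^ 4 * ((1 - u + s⁻¹) * ((1 - u + s⁻¹) - 1 + u) *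
      ((1 - u + s⁻¹) ^ 2 - (1 - u + s⁻¹) + u ^ 2)) = g s := fun s hs => by
    simp only [g]
    field_simp
    linear_combination (norm := ring_nf)
    reduce_mod_char!
  have hd : u * (u - 1) * (u + 1) ^ 2 ≠ 0 := by positivity
  have hw : (u * (u - 1) * (u + 1) ^ 4)⁻¹ ≠ 0 := by positivity
  have htwist : ∀ x : F, g ((x ^ 3 + u * (u + 1) ^ 2) / (u * (u - 1) * (u + 1) ^ 2)) =
      ((u * (u - 1) * (u + 1) ^ 4)⁻¹) ^ 2 *
        (-1 * (-(u + 1) * (x * (x ^ 2 + (u + 1) * x - u * (u + 1))))) ^ 3 := fun x => by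
    simp only [g]
    field_simp
    linear_combination (norm := ring_nf)
    reduce_mod_char!
  rw [sum_quadraticChar_eq_of_inv_add (by ring) hinv,
    ← sum_comp_frobenius_add_div 3 _ (u * (u + 1) ^ 2) hd, cubicCharSum, ← sum_neg_distrib]
  simp_rw [htwist, quadraticChar_sq_mul hw, quadraticChar_pow_of_odd (by decide : Odd 3),
    map_mul, hneg, neg_one_mul]
  simp [g]

end CharThree

theorem stmt_12_general (n : ℕ) (hodd : Odd n)
    (F : Type*) [Field F] [Fintype F] [DecidableEq F]
    (hcard : Fintype.card F = 3 ^ n)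
    (u : F) (hu : u ^ 3 ≠ u)
    (huu : quadraticChar F (u + 1) ≠ quadraticChar F (u - 1)) :
    (∑ z : F, quadraticChar F ((z * (z - 1 + u)) * (z ^ 2 - z + u ^ 2))) +
      (∑ z : F, quadraticChar F
        ((-(u + 1) * z) * (z * (z - 1 + u)) * (z ^ 2 - z + u ^ 2))) = -2 := by
  have := charP_of_card_eq_prime_pow hcard
  have hneg : quadraticChar F (-1) = -1 := by
    rw [quadraticChar_neg_one_iff_not_isSquare, FiniteField.isSquare_neg_one_iff, hcard,
      Nat.three_pow_mod_four_of_odd hodd]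
    decide
  have hu' : u * (u - 1) * (u + 1) ≠ 0 := by
    contrapose! hu
    linear_combination hu
  simp only [mul_ne_zero_iff] at hu'
  obtain ⟨⟨hu₀, hu₁⟩, hu₂⟩ := hu'
  rw [sum_quadraticChar_g₃g₄ hneg hu₀ hu₁ hu₂,
    sum_quadraticChar_g₁g₃g₄ hneg hu₀ (quadraticChar_mul_eq_neg_one_of_ne hu₂ hu₁ huu)]
  ring

theorem stmt_12 (n : ℕ) (hn : 3 ≤ n) (hodd : Odd n)
    (F : Type*) [Field F] [Fintype F] [DecidableEq F]
    (hcard : Fintype.card F = 3 ^ n)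
    (u : F) (hu : u ^ 3 ≠ u)
    (huu : quadraticChar F (u + 1) ≠ quadraticChar F (u - 1)) :
    (∑ z : F, quadraticChar F ((z * (z - 1 + u)) * (z ^ 2 - z + u ^ 2))) +
      (∑ z : F, quadraticChar F
        ((-(u + 1) * z) * (z * (z - 1 + u)) * (z ^ 2 - z + u ^ 2))) = -2 :=
  stmt_12_general n hodd F hcard u hu huu
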